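/- (Local embedding for p = 2.) There exists an absolute constant C > 0 such that for every Dirichlet polynomial P(s) = ∑_{n=1}^N a_n n^{-s} and every τ ∈ ℝ, ∫_τ^{τ+1} |∑_{n=1}^N a_n n^{-1/2 − it}|² dt ≤ C ∑_{n=1}^N |a_n|². -/

import Mathlib

/-!
Majorize the indicator of `[τ, τ + 1]` by the triangle `t ↦ 2 - |t - τ|` on `[τ - 2, τ + 2]`.
Expanding the square, the weighted integral becomes a bilinear form in `aₘ / √m` whose kernel
is the Fourier transform of the triangle at `log n - log m`; this transform equals
`(e^{2iξ} + e^{-2iξ} - 2) / (iξ)²` and hence is `O(1 / (1 + ξ²))`. A Schur test with weights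
`1 / √n` then reduces everything to the uniform bound `∑ₙ 1 / (n (1 + (log n - μ)²)) ≤ 6π`,
which telescopes through `arctan (log n - μ)`.
-/

open Complex ComplexConjugate Finset

lemma le_arctan_sub_arctan {x y : ℝ} (hxy : x ≤ y) (hyx : y ≤ x + 1) :
    (y - x) / (3 * (1 + x ^ 2)) ≤ Real.arctan y - Real.arctan x := by
  have hderiv : ∀ ξ ∈ interior (Set.Icc x y), 1 / (3 * (1 + x ^ 2)) ≤ deriv Real.arctan ξ := by
    intro ξ hξ
    rw [interior_Icc] at hξ
    rw [Real.deriv_arctan]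
    apply one_div_le_one_div_of_le (by positivity)
    nlinarith [mul_nonneg (sub_nonneg.2 hξ.1.le) (sub_nonneg.2 (hξ.2.le.trans hyx)),
      sq_nonneg (ξ - (2 * x + 1))]
  have := (convex_Icc x y).mul_sub_le_image_sub_of_le_deriv
    Real.continuous_arctan.continuousOn Real.differentiable_arctan.differentiableOn hderiv
    x (Set.left_mem_Icc.2 hxy) y (Set.right_mem_Icc.2 hxy) hxy
  rwa [one_div_mul_eq_div] at this

lemma log_succ_sub_log_mem_Icc {n : ℕ} (hn : 1 ≤ n) :
    Real.log (n + 1) - Real.log n ∈ Set.Icc (1 / (2 * n : ℝ)) 1 := by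
  have hn' : (1 : ℝ) ≤ n := by exact_mod_cast hn
  rw [← Real.log_div (by positivity) (by positivity)]
  constructor
  · calc 1 / (2 * n) ≤ 1 - ((n + 1) / n : ℝ)⁻¹ := by field_simp; linarith
      _ ≤ _ := Real.one_sub_inv_le_log_of_pos (by positivity)
  · calc _ ≤ ((n + 1) / n : ℝ) - 1 := Real.log_le_sub_one_of_pos (by positivity)
      _ ≤ 1 := by rw [div_sub_one (by positivity), div_le_one (by positivity)]; linarith

lemma inv_mul_one_add_sq_le_arctan_sub (μ : ℝ) {n : ℕ} (hn : 1 ≤ n) :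
    ((n : ℝ) * (1 + (Real.log n - μ) ^ 2))⁻¹ ≤
      6 * (Real.arctan (Real.log (n + 1) - μ) - Real.arctan (Real.log n - μ)) := by
  obtain ⟨hlo, hhi⟩ := log_succ_sub_log_mem_Icc hn
  have hpos : 0 < 1 / (2 * (n : ℝ)) := by positivity
  have key := le_arctan_sub_arctan (x := Real.log n - μ) (y := Real.log (n + 1) - μ)
    (by linarith) (by linarith)
  calc ((n : ℝ) * (1 + (Real.log n - μ) ^ 2))⁻¹
      = 6 * (1 / (2 * n) / (3 * (1 + (Real.log n - μ) ^ 2))) := by field_simp; ring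
    _ ≤ 6 * ((Real.log (n + 1) - μ - (Real.log n - μ)) / (3 * (1 + (Real.log n - μ) ^ 2))) := by
        gcongr; linarith
    _ ≤ _ := by gcongr

lemma sum_Icc_inv_mul_one_add_sq_log_sub_le (μ : ℝ) (N : ℕ) :
    ∑ n ∈ Icc 1 N, ((n : ℝ) * (1 + (Real.log n - μ) ^ 2))⁻¹ ≤ 6 * Real.pi := by
  have telescope : ∀ N : ℕ, ∑ n ∈ Icc 1 N, ((n : ℝ) * (1 + (Real.log n - μ) ^ 2))⁻¹ ≤
      6 * (Real.arctan (Real.log (N + 1) - μ) - Real.arctan (Real.log 1 - μ)) := by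
    intro N
    induction N with
    | zero => simp
    | succ N ih =>
      rw [sum_Icc_succ_top (by omega)]
      have := inv_mul_one_add_sq_le_arctan_sub μ (Nat.le_add_left 1 N)
      push_cast at this ⊢
      linarith
  linarith [telescope N, Real.arctan_lt_pi_div_two (Real.log (N + 1) - μ),
    Real.neg_pi_div_two_lt_arctan (Real.log 1 - μ)]

lemma sum_sum_mul_le_of_row_sum_le {ι : Type*} (s : Finset ι) (x w : ι → ℝ) (K : ι → ι → ℝ)
    {B : ℝ} (hK : ∀ i j, 0 ≤ K i j) (hK_symm : ∀ i j, K i j = K j i)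
    (hrow : ∀ i ∈ s, ∑ j ∈ s, K i j * w j ^ 2 ≤ B) :
    ∑ i ∈ s, ∑ j ∈ s, x i * w i * (x j * w j) * K i j ≤ B * ∑ i ∈ s, x i ^ 2 := by
  have amgm : ∀ i j, x i * w i * (x j * w j) * K i j ≤
      (x i ^ 2 * (K i j * w j ^ 2) + x j ^ 2 * (K j i * w i ^ 2)) / 2 := by
    intro i j
    rw [hK_symm j i]
    nlinarith [mul_nonneg (hK i j) (sq_nonneg (x i * w j - x j * w i))]
  have swap : ∑ i ∈ s, ∑ j ∈ s, x j ^ 2 * (K j i * w i ^ 2) =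
      ∑ i ∈ s, ∑ j ∈ s, x i ^ 2 * (K i j * w j ^ 2) := sum_comm
  have row : ∑ i ∈ s, ∑ j ∈ s, x i ^ 2 * (K i j * w j ^ 2) ≤ ∑ i ∈ s, x i ^ 2 * B := by
    gcongr with i hi
    rw [← mul_sum]
    exact mul_le_mul_of_nonneg_left (hrow i hi) (sq_nonneg _)
  calc ∑ i ∈ s, ∑ j ∈ s, x i * w i * (x j * w j) * K i j
      ≤ ∑ i ∈ s, ∑ j ∈ s, (x i ^ 2 * (K i j * w j ^ 2) + x j ^ 2 * (K j i * w i ^ 2)) / 2 := by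
        gcongr with i _ j _; exact amgm i j
    _ = ∑ i ∈ s, ∑ j ∈ s, x i ^ 2 * (K i j * w j ^ 2) := by
        simp only [← sum_div, sum_add_distrib, swap]; ring
    _ ≤ B * ∑ i ∈ s, x i ^ 2 := by rw [mul_sum]; simpa only [mul_comm B] using row

lemma integral_two_sub_mul_cexp {k : ℂ} (hk : k ≠ 0) :
    ∫ u in (0 : ℝ)..2, (2 - (u : ℂ)) * cexp (k * u) = (cexp (2 * k) - 1 - 2 * k) / k ^ 2 := by
  have hF : ∀ z : ℂ, HasDerivAt (fun z => ((2 - z) / k + 1 / k ^ 2) * cexp (k * z))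
      ((2 - z) * cexp (k * z)) z := by
    intro z
    have h := ((((hasDerivAt_id z).const_sub 2).div_const k).add_const (1 / k ^ 2)).mul
      (((hasDerivAt_id z).const_mul k).cexp)
    refine h.congr_deriv ?_
    simp only [id]
    field_simp
    ring
  rw [intervalIntegral.integral_eq_sub_of_hasDerivAt (fun u _ => (hF u).comp_ofReal)
    (Continuous.intervalIntegrable (by fun_prop) _ _)]
  push_cast
  field_simp
  simp only [sub_self, mul_zero, zero_mul, zero_add, one_mul, sub_zero, exp_zero, mul_one]
  ring

lemma integral_triangle_mul_cexp {k : ℂ} (hk : k ≠ 0) :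
    ∫ u in (-2 : ℝ)..2, ((2 - |u| : ℝ) : ℂ) * cexp (k * u) =
      (cexp (2 * k) + cexp (-(2 * k)) - 2) / k ^ 2 := by
  have hcont : Continuous fun u : ℝ => ((2 - |u| : ℝ) : ℂ) * cexp (k * u) := by fun_prop
  have hsymm : ∀ k' : ℂ, ∫ u in (0 : ℝ)..2, ((2 - |u| : ℝ) : ℂ) * cexp (k' * u) =
      ∫ u in (0 : ℝ)..2, (2 - (u : ℂ)) * cexp (k' * u) := by
    intro k'
    refine intervalIntegral.integral_congr fun u hu => ?_
    rw [Set.uIcc_of_le zero_le_two] at hu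
    simp [abs_of_nonneg hu.1]
  have hleft : ∫ u in (-2 : ℝ)..0, ((2 - |u| : ℝ) : ℂ) * cexp (k * u) =
      ∫ u in (0 : ℝ)..2, ((2 - |u| : ℝ) : ℂ) * cexp (-k * u) := by
    simpa using (intervalIntegral.integral_comp_neg (a := 0) (b := 2)
      fun u : ℝ => ((2 - |u| : ℝ) : ℂ) * cexp (k * u)).symm
  rw [← intervalIntegral.integral_add_adjacent_intervals (b := 0) (hcont.intervalIntegrable _ _)
    (hcont.intervalIntegrable _ _), hleft, hsymm, hsymm, integral_two_sub_mul_cexp hk,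
    integral_two_sub_mul_cexp (neg_ne_zero.2 hk)]
  ring_nf

lemma norm_integral_triangle_mul_cexp_le (ξ : ℝ) :
    ‖∫ u in (-2 : ℝ)..2, ((2 - |u| : ℝ) : ℂ) * cexp (I * ξ * u)‖ ≤ 16 / (1 + ξ ^ 2) := by
  have hbound : ‖∫ u in (-2 : ℝ)..2, ((2 - |u| : ℝ) : ℂ) * cexp (I * ξ * u)‖ ≤ 8 := by
    refine (intervalIntegral.norm_integral_le_of_norm_le_const (C := 2) fun u hu => ?_).trans
      (by norm_num)
    rw [Set.uIoc_of_le (by norm_num)] at hu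
    rw [norm_mul, norm_real, Real.norm_eq_abs, norm_exp]
    simp only [mul_re, I_re, ofReal_re, I_im, ofReal_im, zero_mul, sub_zero, mul_zero,
      Real.exp_zero, mul_one]
    rw [abs_le]
    constructor <;> cases abs_cases u <;> linarith [hu.1, hu.2]
  rcases le_or_gt (ξ ^ 2) 1 with hξ | hξ
  · exact hbound.trans (by rw [le_div_iff₀ (by positivity)]; linarith)
  have hξ0 : (I * ξ : ℂ) ≠ 0 := by
    have : ξ ≠ 0 := by rintro rfl; norm_num at hξ
    simpa [I_ne_zero] using this
  have hunit : ∀ z : ℂ, z.re = 0 → ‖cexp z‖ = 1 := fun z hz => by rw [norm_exp, hz, Real.exp_zero]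
  rw [integral_triangle_mul_cexp hξ0, norm_div, norm_pow, norm_mul, norm_I, one_mul, norm_real,
    Real.norm_eq_abs, sq_abs]
  calc ‖cexp (2 * (I * ξ)) + cexp (-(2 * (I * ξ))) - 2‖ / ξ ^ 2
      ≤ (1 + 1 + 2) / ξ ^ 2 := by
        gcongr
        refine (norm_sub_le _ _).trans (add_le_add ((norm_add_le _ _).trans ?_) (by simp))
        rw [hunit _ (by simp), hunit _ (by simp)]
    _ ≤ 16 / (1 + ξ ^ 2) := by
        rw [div_le_div_iff₀ (by positivity) (by positivity)]; nlinarith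

lemma norm_integral_triangle_shift_mul_cexp_le (c ξ : ℝ) :
    ‖∫ t in (c - 2)..(c + 2), ((2 - |t - c| : ℝ) : ℂ) * cexp (I * ξ * t)‖ ≤ 16 / (1 + ξ ^ 2) := by
  have hshift := intervalIntegral.integral_comp_add_right (a := -2) (b := 2)
    (fun t : ℝ => ((2 - |t - c| : ℝ) : ℂ) * cexp (I * ξ * t)) c
  have hfactor : ∀ u : ℝ, ((2 - |u + c - c| : ℝ) : ℂ) * cexp (I * ξ * ↑(u + c)) =
      cexp (I * ξ * c) * (((2 - |u| : ℝ) : ℂ) * cexp (I * ξ * u)) := by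
    intro u
    rw [add_sub_cancel_right, ofReal_add, mul_add, exp_add]
    ring
  rw [show -2 + c = c - 2 by ring, show 2 + c = c + 2 by ring] at hshift
  simp only [hfactor, intervalIntegral.integral_const_mul] at hshift
  rw [← hshift, norm_mul, show I * ξ * c = I * ↑(ξ * c) by push_cast; ring,
    norm_exp_I_mul_ofReal, one_mul]
  exact norm_integral_triangle_mul_cexp_le ξ

theorem integral_triangle_mul_norm_sum_sq_le {ι : Type*} (s : Finset ι) (b : ι → ℂ) (ω : ι → ℝ)
    (c : ℝ) :
    ∫ t in (c - 2)..(c + 2), (2 - |t - c|) * ‖∑ i ∈ s, b i * cexp (I * ω i * t)‖ ^ 2 ≤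
      ∑ i ∈ s, ∑ j ∈ s, ‖b i‖ * ‖b j‖ * (16 / (1 + (ω i - ω j) ^ 2)) := by
  set F : ℝ → ℂ := fun t => ∑ i ∈ s, b i * cexp (I * ω i * t)
  let pair (ξ t : ℝ) : ℂ := ((2 - |t - c| : ℝ) : ℂ) * cexp (I * ξ * t)
  have hpair : ∀ ξ, Continuous (pair ξ) := fun ξ => by fun_prop
  have hexpand : ∀ t, ((2 - |t - c| : ℝ) : ℂ) * (F t * conj (F t)) =
      ∑ i ∈ s, ∑ j ∈ s, b i * conj (b j) * pair (ω i - ω j) t := by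
    intro t
    rw [map_sum, sum_mul_sum, mul_sum]
    refine sum_congr rfl fun i _ => ?_
    rw [mul_sum]
    refine sum_congr rfl fun j _ => ?_
    simp only [pair]
    rw [map_mul, ← exp_conj, show conj (I * ω j * t) = -I * ω j * t by simp,
      show I * ↑(ω i - ω j) * ↑t = I * ω i * t + -I * ω j * t by push_cast; ring, exp_add]
    ring
  have hre : ∀ t, (2 - |t - c|) * ‖F t‖ ^ 2 =
      (((2 - |t - c| : ℝ) : ℂ) * (F t * conj (F t))).re := by
    intro t
    rw [mul_conj, normSq_eq_norm_sq, ← ofReal_mul, ofReal_re]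
  have hcont : Continuous fun t => ((2 - |t - c| : ℝ) : ℂ) * (F t * conj (F t)) := by fun_prop
  calc ∫ t in (c - 2)..(c + 2), (2 - |t - c|) * ‖F t‖ ^ 2
      = (∫ t in (c - 2)..(c + 2), ((2 - |t - c| : ℝ) : ℂ) * (F t * conj (F t))).re := by
        simp_rw [hre]; exact reCLM.intervalIntegral_comp_comm (hcont.intervalIntegrable _ _)
    _ ≤ ‖∑ i ∈ s, ∑ j ∈ s, b i * conj (b j) * ∫ t in (c - 2)..(c + 2), pair (ω i - ω j) t‖ := by
        refine (re_le_norm _).trans_eq (congrArg _ ?_)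
        simp_rw [hexpand]
        have hterm : ∀ i j, Continuous fun t => b i * conj (b j) * pair (ω i - ω j) t :=
          fun i j => continuous_const.mul (hpair _)
        rw [intervalIntegral.integral_finsetSum fun i _ =>
          (continuous_finsetSum _ fun j _ => hterm i j).intervalIntegrable _ _]
        refine sum_congr rfl fun i _ => ?_
        rw [intervalIntegral.integral_finsetSum fun j _ => (hterm i j).intervalIntegrable _ _]
        simp only [intervalIntegral.integral_const_mul]
    _ ≤ ∑ i ∈ s, ∑ j ∈ s, ‖b i‖ * ‖b j‖ * ‖∫ t in (c - 2)..(c + 2), pair (ω i - ω j) t‖ := by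
        refine (norm_sum_le _ _).trans (sum_le_sum fun i _ => (norm_sum_le _ _).trans_eq ?_)
        simp only [norm_mul, RCLike.norm_conj]
    _ ≤ _ := by
        gcongr with i _ j _
        exact norm_integral_triangle_shift_mul_cexp_le c (ω i - ω j)

lemma integral_le_integral_triangle_mul {f : ℝ → ℝ} (hf : Continuous f) (hf0 : ∀ t, 0 ≤ f t)
    (τ : ℝ) : ∫ t in τ..τ + 1, f t ≤ ∫ t in (τ - 2)..(τ + 2), (2 - |t - τ|) * f t := by
  have hg : Continuous fun t => (2 - |t - τ|) * f t := by fun_prop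
  calc ∫ t in τ..τ + 1, f t ≤ ∫ t in τ..τ + 1, (2 - |t - τ|) * f t := by
        refine intervalIntegral.integral_mono_on (by linarith) (hf.intervalIntegrable _ _)
          (hg.intervalIntegrable _ _) fun t ht => ?_
        have : |t - τ| ≤ 1 := abs_le.2 ⟨by linarith [ht.1], by linarith [ht.2]⟩
        nlinarith [hf0 t]
    _ ≤ ∫ t in (τ - 2)..(τ + 2), (2 - |t - τ|) * f t := by
        refine intervalIntegral.integral_mono_interval (by linarith) (by linarith) (by linarith)
          ?_ (hg.intervalIntegrable _ _)
        filter_upwards [MeasureTheory.ae_restrict_mem measurableSet_Ioc] with t ht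
        have : |t - τ| ≤ 2 := abs_le.2 ⟨by linarith [ht.1], by linarith [ht.2]⟩
        exact mul_nonneg (by linarith) (hf0 t)

lemma natCast_cpow_neg_half_sub_I_mul {n : ℕ} (hn : n ≠ 0) (t : ℝ) :
    (n : ℂ) ^ (-(1 / 2 : ℂ) - I * t) =
      (n : ℂ) ^ (-(1 / 2 : ℂ)) * cexp (I * ↑(-Real.log n) * t) := by
  have hn' : (n : ℂ) ≠ 0 := Nat.cast_ne_zero.2 hn
  rw [cpow_sub _ _ hn', cpow_def_of_ne_zero hn' (I * t), div_eq_mul_inv, ← exp_neg, ofReal_neg,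
    natCast_log]
  ring_nf

lemma norm_natCast_cpow_neg_half (n : ℕ) (hn : n ≠ 0) :
    ‖(n : ℂ) ^ (-(1 / 2 : ℂ))‖ = (Real.sqrt n)⁻¹ := by
  rw [norm_natCast_cpow_of_pos (Nat.pos_of_ne_zero hn), Real.sqrt_eq_rpow, ← Real.rpow_neg
    (Nat.cast_nonneg n)]
  norm_num

theorem stmt6 : ∃ C : ℝ, 0 < C ∧ ∀ (N : ℕ) (a : ℕ → ℂ) (τ : ℝ),
    (∫ t in τ..(τ + 1),
      ‖∑ n ∈ Finset.Icc 1 N, a n * (n : ℂ) ^ (-(1/2 : ℂ) - Complex.I * (t : ℂ))‖ ^ 2) ≤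
    C * ∑ n ∈ Finset.Icc 1 N, ‖a n‖ ^ 2 := by
  refine ⟨96 * Real.pi, by positivity, fun N a τ => ?_⟩
  have hne : ∀ n ∈ Icc 1 N, n ≠ 0 := fun n hn => Nat.one_le_iff_ne_zero.1 (mem_Icc.1 hn).1
  set ω : ℕ → ℝ := fun n => -Real.log n
  have hdirichlet : ∀ t : ℝ, ∑ n ∈ Icc 1 N, a n * (n : ℂ) ^ (-(1 / 2 : ℂ) - I * t) =
      ∑ n ∈ Icc 1 N, a n * (n : ℂ) ^ (-(1 / 2 : ℂ)) * cexp (I * ω n * t) := fun t =>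
    sum_congr rfl fun n hn => by rw [natCast_cpow_neg_half_sub_I_mul (hne n hn) t, ← mul_assoc]
  simp_rw [hdirichlet]
  set K : ℕ → ℕ → ℝ := fun m n => 16 / (1 + (ω m - ω n) ^ 2)
  have hrow : ∀ m ∈ Icc 1 N, ∑ n ∈ Icc 1 N, K m n * (Real.sqrt n)⁻¹ ^ 2 ≤ 96 * Real.pi := by
    intro m _
    calc ∑ n ∈ Icc 1 N, K m n * (Real.sqrt n)⁻¹ ^ 2
        = 16 * ∑ n ∈ Icc 1 N, ((n : ℝ) * (1 + (Real.log n - Real.log m) ^ 2))⁻¹ := by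
          rw [mul_sum]
          refine sum_congr rfl fun n _ => ?_
          rw [inv_pow, Real.sq_sqrt (Nat.cast_nonneg n)]
          simp only [K, ω, mul_inv]
          ring
      _ ≤ 16 * (6 * Real.pi) := by gcongr; exact sum_Icc_inv_mul_one_add_sq_log_sub_le _ N
      _ = 96 * Real.pi := by ring
  calc _ ≤ ∫ t in (τ - 2)..(τ + 2), (2 - |t - τ|) *
          ‖∑ n ∈ Icc 1 N, a n * (n : ℂ) ^ (-(1 / 2 : ℂ)) * cexp (I * ω n * t)‖ ^ 2 :=
        integral_le_integral_triangle_mul (by fun_prop) (fun t => by positivity) τ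
    _ ≤ ∑ m ∈ Icc 1 N, ∑ n ∈ Icc 1 N, ‖a m * (m : ℂ) ^ (-(1 / 2 : ℂ))‖ *
          ‖a n * (n : ℂ) ^ (-(1 / 2 : ℂ))‖ * K m n :=
        integral_triangle_mul_norm_sum_sq_le _ _ ω τ
    _ = ∑ m ∈ Icc 1 N, ∑ n ∈ Icc 1 N, ‖a m‖ * (Real.sqrt m)⁻¹ * (‖a n‖ * (Real.sqrt n)⁻¹) * K m n :=
        sum_congr rfl fun m hm => sum_congr rfl fun n hn => by
          rw [norm_mul, norm_mul, norm_natCast_cpow_neg_half m (hne m hm),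
            norm_natCast_cpow_neg_half n (hne n hn)]
    _ ≤ 96 * Real.pi * ∑ n ∈ Icc 1 N, ‖a n‖ ^ 2 :=
        sum_sum_mul_le_of_row_sum_le _ _ _ K (fun m n => by positivity)
          (fun m n => by simp only [K]; ring) hrow
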